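/- For the random-walk dynamical system, let F∈L^∞(X,μ) be of the form F(α;y₁,y₂)=F_α(y₁) (independent of y₂), set f_α:=∫₀¹ F_α(y₁)dy₁, and let Q={0}×[0,1)×I where I⊆[0,1) is an interval of length h. Then for every n∈ℕ, ∫_{TⁿQ} F dμ = h · Σ_{β⁽¹⁾,…,β⁽ⁿ⁾∈ℤ^d} p_{β⁽¹⁾}p_{β⁽²⁾}⋯p_{β⁽ⁿ⁾} f_{β⁽¹⁾+⋯+β⁽ⁿ⁾} = h · Σ_{α∈ℤ^d} p^{(n)}_α f_α, where p^{(n)} is the n-fold convolution of p with itself. -/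

import Mathlib

noncomputable section

open MeasureTheory Filter Topology

/-- The phase space `X = ℤ^d × [0,1)²` (embedded in `ℤ^d × ℝ²`; the invariant measure
is supported on `ℤ^d × [0,1)²`). -/
abbrev RWSpace (d : ℕ) := (Fin d → ℤ) × ℝ × ℝ

/-- The data of a random walk on `ℤ^d`: a probability distribution `p` on `ℤ^d` together
with an enumeration `e` of `ℤ^d` (whose restriction to the support of `p` enumerates the
set `D` of active directions; indices carrying zero probability contribute empty
rectangles and do not affect the map). -/
structure RW (d : ℕ) where
  p : (Fin d → ℤ) → ℝ
  nonneg : ∀ β, 0 ≤ p β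
  total : HasSum p 1
  e : ℕ ≃ (Fin d → ℤ)

namespace RW

variable {d : ℕ}

/-- The cumulative sums `q_k = Σ_{j<k} p_{β^{(j)}}`. -/
def q (R : RW d) (k : ℕ) : ℝ := ∑ j ∈ Finset.range k, R.p (R.e j)

/-- The index `k` such that `y ∈ [q_k, q_{k+1})` (for `y ∈ [0,1)`). -/
def idx (R : RW d) (y : ℝ) : ℕ := sSup {j | R.q j ≤ y}

/-- The random-walk (coupled bakers') map
`T(α; y₁, y₂) = (α + β^{(k)}; p_{β^{(k)}}⁻¹(y₁ − q_{k-1}), p_{β^{(k)}} y₂ + q_{k-1})`. -/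
def T (R : RW d) : RWSpace d → RWSpace d := fun x =>
  (x.1 + R.e (R.idx x.2.1),
   (x.2.1 - R.q (R.idx x.2.1)) / R.p (R.e (R.idx x.2.1)),
   R.p (R.e (R.idx x.2.1)) * x.2.2 + R.q (R.idx x.2.1))

/-- The inverse of the random-walk map. -/
def Tinv (R : RW d) : RWSpace d → RWSpace d := fun x =>
  (x.1 - R.e (R.idx x.2.2),
   R.p (R.e (R.idx x.2.2)) * x.2.1 + R.q (R.idx x.2.2),
   (x.2.2 - R.q (R.idx x.2.2)) / R.p (R.e (R.idx x.2.2)))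

/-- The iterate `T^t` for `t ∈ ℤ` (using the inverse map for negative times). -/
def iterZ (R : RW d) (t : ℤ) : RWSpace d → RWSpace d :=
  if 0 ≤ t then (R.T)^[t.toNat] else (R.Tinv)^[(-t).toNat]

end RW

/-- The invariant measure `μ`: counting measure on `ℤ^d` times Lebesgue measure on
`[0,1)²`. -/
def rwMeasure (d : ℕ) : Measure (RWSpace d) :=
  (Measure.count : Measure (Fin d → ℤ)).prod
    ((volume.restrict (Set.Ico (0:ℝ) 1)).prod (volume.restrict (Set.Ico (0:ℝ) 1)))

/-- The set `V = B_{γ,r} × [0,1)²`, where `B_{γ,r}` is the square box of center `γ` and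
radius `r` in `ℤ^d`. -/
def rwBox {d : ℕ} (γ : Fin d → ℤ) (r : ℕ) : Set (RWSpace d) :=
  {x | (∀ i, |x.1 i - γ i| ≤ (r : ℤ)) ∧ x.2.1 ∈ Set.Ico (0:ℝ) 1 ∧ x.2.2 ∈ Set.Ico (0:ℝ) 1}

/-- The exhaustive family `𝒱 = {B_{γ,r} × [0,1)² : γ ∈ ℤ^d, r ∈ ℤ⁺}`. -/
def rwFamily (d : ℕ) : Set (Set (RWSpace d)) :=
  {V | ∃ γ : Fin d → ℤ, ∃ r : ℕ, 1 ≤ r ∧ V = rwBox γ r}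

/-- The (μ-uniform) infinite-volume limit of a set function `φ` along the family `𝒱`
equals `L`. -/
def IVLim {Y : Type*} [MeasurableSpace Y] (μ : Measure Y) (𝒱 : Set (Set Y))
    (φ : Set Y → ℝ) (L : ℝ) : Prop :=
  ∀ ε > 0, ∃ M : ℝ, 0 < M ∧ ∀ V ∈ 𝒱, M ≤ (μ V).toReal → |φ V - L| < ε

/-- The normalized average `μ_V(F) = (1/μ(V)) ∫_V F dμ` of `F` over a set `V`. -/
def avgOn {Y : Type*} [MeasurableSpace Y] (μ : Measure Y) (F : Y → ℝ) (V : Set Y) : ℝ :=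
  (∫ x in V, F x ∂μ) / (μ V).toReal

/-- `F` possesses the infinite-volume average `L` along the family `𝒱`. -/
def HasAvg {Y : Type*} [MeasurableSpace Y] (μ : Measure Y) (𝒱 : Set (Set Y))
    (F : Y → ℝ) (L : ℝ) : Prop :=
  IVLim μ 𝒱 (avgOn μ F) L

/-- The convolution `(a * b)_α = Σ_β a_β b_{α−β}` on `ℤ^d`. -/
def convZ {d : ℕ} (a b : (Fin d → ℤ) → ℝ) : (Fin d → ℤ) → ℝ :=
  fun α => ∑' β : Fin d → ℤ, a β * b (α - β)

/-- The `n`-fold convolution `p^{(n)} = p * ⋯ * p` (with `p^{(0)} = δ_0`). -/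
def convPow {d : ℕ} (p : (Fin d → ℤ) → ℝ) : ℕ → ((Fin d → ℤ) → ℝ)
  | 0 => fun α => if α = 0 then 1 else 0
  | n + 1 => convZ p (convPow p n)

/-!
`T` maps a strip `{α} × [0,1) × [u,v)` onto the disjoint union over `k` of the strips
`{α + β_k} × [0,1) × [p_k u + q_k, p_k v + q_k)`. Iterating, `TⁿQ` is the disjoint union, over
all itineraries `c = (c₀, …, c_{n-1})`, of strips at the sites `β_{c₀} + ⋯ + β_{c_{n-1}}` of
height `h ∏ᵢ p_{β_{cᵢ}}`; the `y₂`-intervals of distinct itineraries lie in disjoint slots. As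
`F` does not depend on `y₂`, each strip contributes its height times `f` at its site. Grouping
itineraries by their endpoint turns the multinomial sum into the convolution power `p⁽ⁿ⁾`.
-/

open Set Function

theorem hasSum_prod_pi {α : Type*} {p : α → ℝ} (hp0 : ∀ a, 0 ≤ p a) (hp1 : HasSum p 1)
    (n : ℕ) : HasSum (fun c : Fin n → α => ∏ i, p (c i)) 1 := by
  induction n with
  | zero => simp [hasSum_unique]
  | succ n ih =>
    have hprod (c : Fin n → α) : 0 ≤ ∏ i, p (c i) := Finset.prod_nonneg fun i _ => hp0 _
    have hmul := HasSum.mul (g := fun c : Fin n → α => ∏ i, p (c i)) hp1 ih <|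
      Summable.mul_of_nonneg (f := p) (g := fun c : Fin n → α => ∏ i, p (c i))
        hp1.summable ih.summable hp0 hprod
    rw [← (Fin.consEquiv fun _ => α).hasSum_iff]
    simpa [comp_def, Fin.consEquiv, Fin.prod_univ_succ] using hmul

section Convolution

variable {d : ℕ} {p : (Fin d → ℤ) → ℝ}

theorem hasSum_indicator_sum_eq_convPow (hp0 : ∀ β, 0 ≤ p β) (hp1 : HasSum p 1) (n : ℕ)
    (α : Fin d → ℤ) :
    HasSum ({c : Fin n → Fin d → ℤ | ∑ i, c i = α}.indicator fun c => ∏ i, p (c i))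
      (convPow p n α) := by
  induction n generalizing α with
  | zero =>
    convert hasSum_unique (β := Fin 0 → Fin d → ℤ) _
    by_cases h : α = 0 <;> simp [convPow, h, eq_comm]
  | succ n ih =>
    have hprod (c : Fin n → Fin d → ℤ) : 0 ≤ ∏ i, p (c i) := Finset.prod_nonneg fun i _ => hp0 _
    have hsum : Summable fun x : (Fin d → ℤ) × (Fin n → Fin d → ℤ) =>
        p x.1 * {c : Fin n → Fin d → ℤ | ∑ i, c i = α - x.1}.indicator
          (fun c => ∏ i, p (c i)) x.2 :=
      (hp1.summable.mul_of_nonneg (hasSum_prod_pi hp0 hp1 n).summable hp0 hprod).of_nonneg_of_le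
        (fun x => mul_nonneg (hp0 _) (indicator_nonneg (fun c _ => hprod c) _))
        (fun x => mul_le_mul_of_nonneg_left (indicator_le_self' (fun c _ => hprod c) _) (hp0 _))
    have hconv := hsum.hasSum.prod_fiberwise fun β => (ih (α - β)).mul_left (p β)
    rw [← (Fin.consEquiv fun _ => Fin d → ℤ).hasSum_iff,
      show convPow p (n + 1) α = _ from hconv.tsum_eq]
    convert hsum.hasSum using 2 with x
    simp only [comp_apply, Fin.consEquiv, Equiv.coe_fn_mk, indicator_apply,
      mem_ofPred_eq, Fin.sum_univ_succ, Fin.prod_univ_succ, Fin.cons_zero, Fin.cons_succ,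
      eq_sub_iff_add_eq']
    split_ifs <;> simp

theorem tsum_prod_mul_sum_eq_tsum_convPow (hp0 : ∀ β, 0 ≤ p β) (hp1 : HasSum p 1) (n : ℕ)
    {g : (Fin d → ℤ) → ℝ} {C : ℝ} (hg : ∀ α, |g α| ≤ C) :
    ∑' c : Fin n → Fin d → ℤ, (∏ i, p (c i)) * g (∑ i, c i) = ∑' α, convPow p n α * g α := by
  have hs : Summable fun c : Fin n → Fin d → ℤ => (∏ i, p (c i)) * g (∑ i, c i) :=
    ((hasSum_prod_pi hp0 hp1 n).summable.mul_right C).of_norm_bounded fun c => by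
      rw [Real.norm_eq_abs, abs_mul, abs_of_nonneg (Finset.prod_nonneg fun i _ => hp0 (c i))]
      exact mul_le_mul_of_nonneg_left (hg _) (Finset.prod_nonneg fun i _ => hp0 (c i))
  refine (hs.hasSum.tsum_fiberwise fun c => ∑ i, c i).tsum_eq.symm.trans
    (tsum_congr fun α => ?_)
  have hfib (c : (fun c : Fin n → Fin d → ℤ => ∑ i, c i) ⁻¹' {α}) :
      (∏ i, p (c.1 i)) * g (∑ i, c.1 i) = (∏ i, p (c.1 i)) * g α := by
    rw [show ∑ i, c.1 i = α from c.2]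
  rw [tsum_congr hfib, tsum_mul_right,
    tsum_subtype (f := fun c : Fin n → Fin d → ℤ => ∏ i, p (c i))]
  exact congrArg (· * g α) (hasSum_indicator_sum_eq_convPow hp0 hp1 n α).tsum_eq

end Convolution

theorem Monotone.disjoint_Ico_map {α β : Type*} [LinearOrder α] [LinearOrder β] {f : α → β}
    (hf : Monotone f) {a b a' b' : α} (h : Disjoint (Ico a b) (Ico a' b')) :
    Disjoint (Ico (f a) (f b)) (Ico (f a') (f b')) := by
  rw [Ico_disjoint_Ico] at h ⊢
  rw [← hf.map_min, ← hf.map_max]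
  exact hf h

section Strip

variable {d : ℕ}

def rwStrip (α : Fin d → ℤ) (u v : ℝ) : Set (RWSpace d) :=
  {α} ×ˢ Ico (0 : ℝ) 1 ×ˢ Ico u v

theorem measurableSet_rwStrip (γ : Fin d → ℤ) (u v : ℝ) : MeasurableSet (rwStrip γ u v) :=
  (measurableSet_singleton _).prod (measurableSet_Ico.prod measurableSet_Ico)

theorem rwMeasure_rwStrip (γ : Fin d → ℤ) {u v : ℝ} (hu : 0 ≤ u) (hv : v ≤ 1) :
    rwMeasure d (rwStrip γ u v) = ENNReal.ofReal (v - u) := by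
  rw [rwStrip, rwMeasure, Measure.prod_prod, Measure.prod_prod, Measure.count_singleton,
    Measure.restrict_apply measurableSet_Ico, Measure.restrict_apply measurableSet_Ico,
    inter_self, inter_eq_self_of_subset_left (Ico_subset_Ico hu hv)]
  simp

theorem setIntegral_rwStrip {F : RWSpace d → ℝ} (hF : Measurable F) {C : ℝ}
    (hFC : ∀ x, |F x| ≤ C) (hFs : ∀ α y₁ y₂ y₂', F (α, y₁, y₂) = F (α, y₁, y₂'))
    (γ : Fin d → ℤ) {u v : ℝ} (hu : 0 ≤ u) (huv : u ≤ v) (hv : v ≤ 1) :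
    ∫ x in rwStrip γ u v, F x ∂rwMeasure d = (v - u) * ∫ y in Ico (0 : ℝ) 1, F (γ, y, 0) := by
  have hrestrict : (rwMeasure d).restrict (rwStrip γ u v) =
      (Measure.dirac γ).prod
        ((volume.restrict (Ico (0 : ℝ) 1)).prod (volume.restrict (Ico u v))) := by
    rw [rwMeasure, rwStrip, ← Measure.prod_restrict, ← Measure.prod_restrict,
      Measure.restrict_singleton, Measure.count_singleton, one_smul,
      Measure.restrict_restrict measurableSet_Ico, Measure.restrict_restrict measurableSet_Ico,
      inter_self, inter_eq_self_of_subset_left (Ico_subset_Ico hu hv)]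
  have hint : Integrable (fun y : ℝ × ℝ => F (γ, y))
      ((volume.restrict (Ico (0 : ℝ) 1)).prod (volume.restrict (Ico u v))) :=
    .of_bound (hF.comp measurable_prodMk_left).aestronglyMeasurable C
      (ae_of_all _ fun y => (Real.norm_eq_abs _).trans_le (hFC _))
  have hinner (y₁ : ℝ) : ∫ y₂ in Ico u v, F (γ, y₁, y₂) = (v - u) * F (γ, y₁, 0) := by
    simp [hFs γ y₁ _ 0, huv]
  rw [hrestrict, Measure.dirac_prod, integral_map measurable_prodMk_left.aemeasurable
    hF.aestronglyMeasurable, integral_prod _ hint]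
  simp only [hinner, integral_const_mul]

end Strip

namespace RW

variable {d : ℕ} (R : RW d)

theorem hasSum_p_e : HasSum (fun k => R.p (R.e k)) 1 :=
  R.e.hasSum_iff.mpr R.total

theorem q_succ (k : ℕ) : R.q (k + 1) = R.q k + R.p (R.e k) :=
  Finset.sum_range_succ _ _

theorem q_mono : Monotone R.q := fun _ _ h =>
  Finset.sum_le_sum_of_subset_of_nonneg (Finset.range_subset_range.2 h) fun _ _ _ => R.nonneg _

theorem q_nonneg (k : ℕ) : 0 ≤ R.q k :=
  Finset.sum_nonneg fun _ _ => R.nonneg _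

theorem q_le_one (k : ℕ) : R.q k ≤ 1 :=
  sum_le_hasSum _ (fun _ _ => R.nonneg _) R.hasSum_p_e

theorem idx_eq {y : ℝ} {k : ℕ} (hy : y ∈ Ico (R.q k) (R.q (k + 1))) : R.idx y = k := by
  have hle : ∀ j ∈ {j | R.q j ≤ y}, j ≤ k := fun j hj =>
    Nat.le_of_lt_succ <| R.q_mono.reflect_lt (hj.trans_lt hy.2)
  exact le_antisymm (csSup_le ⟨k, hy.1⟩ hle) (le_csSup ⟨k, hle⟩ hy.1)

theorem mem_Ico_q_idx {y : ℝ} (hy : y ∈ Ico (0 : ℝ) 1) :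
    y ∈ Ico (R.q (R.idx y)) (R.q (R.idx y + 1)) := by
  classical
  have hex : ∃ k, y < R.q k :=
    (R.hasSum_p_e.tendsto_sum_nat.eventually (eventually_gt_nhds hy.2)).exists
  obtain ⟨k, hk⟩ : ∃ k, Nat.find hex = k + 1 := Nat.exists_eq_succ_of_ne_zero fun h0 => by
    have := Nat.find_spec hex
    rw [h0] at this
    simp [RW.q] at this
    linarith [hy.1]
  have hy' : y ∈ Ico (R.q k) (R.q (k + 1)) :=
    ⟨not_lt.1 (Nat.find_min hex (by omega)), hk ▸ Nat.find_spec hex⟩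
  rwa [R.idx_eq hy']

theorem p_e_pos_of_mem_Ico {y : ℝ} {k : ℕ} (hy : y ∈ Ico (R.q k) (R.q (k + 1))) :
    0 < R.p (R.e k) := by
  linarith [R.q_succ k, hy.1, hy.2]

def squeeze (k : ℕ) (t : ℝ) : ℝ := R.p (R.e k) * t + R.q k

theorem squeeze_mono (k : ℕ) : Monotone (R.squeeze k) := fun _ _ h => by
  unfold squeeze; gcongr; exact R.nonneg _

theorem squeeze_zero (k : ℕ) : R.squeeze k 0 = R.q k := by simp [squeeze]

theorem squeeze_one (k : ℕ) : R.squeeze k 1 = R.q (k + 1) := by simp [squeeze, q_succ, add_comm]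

theorem mapsTo_squeeze (k : ℕ) : MapsTo (R.squeeze k) (Icc 0 1) (Icc 0 1) := fun _ ht =>
  ⟨(R.q_nonneg k).trans (R.squeeze_zero k ▸ R.squeeze_mono k ht.1),
    (R.squeeze_one k ▸ R.squeeze_mono k ht.2).trans (R.q_le_one _)⟩

theorem T_apply_of_mem_Ico (α : Fin d → ℤ) {y₁ : ℝ} (y₂ : ℝ) {k : ℕ}
    (hk : y₁ ∈ Ico (R.q k) (R.q (k + 1))) :
    R.T (α, y₁, y₂) = (α + R.e k, (y₁ - R.q k) / R.p (R.e k), R.squeeze k y₂) := by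
  simp [T, R.idx_eq hk, squeeze]

theorem image_T_rwStrip (α : Fin d → ℤ) (u v : ℝ) :
    R.T '' rwStrip α u v = ⋃ k, rwStrip (α + R.e k) (R.squeeze k u) (R.squeeze k v) := by
  ext ⟨β, s, t⟩
  simp only [rwStrip, mem_image, mem_iUnion, mem_prod, mem_singleton_iff, Prod.exists]
  constructor
  · rintro ⟨α', y₁, y₂, ⟨rfl, hy₁, hy₂⟩, hx⟩
    have hk := R.mem_Ico_q_idx hy₁
    have hp := R.p_e_pos_of_mem_Ico hk
    rw [R.T_apply_of_mem_Ico _ _ hk] at hx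
    obtain ⟨rfl, rfl, rfl⟩ := Prod.ext_iff.1 hx
    refine ⟨R.idx y₁, rfl, ⟨div_nonneg (by linarith [hk.1]) hp.le, ?_⟩, ?_, ?_⟩
    · rw [div_lt_one hp]; linarith [hk.2, R.q_succ (R.idx y₁)]
    · exact R.squeeze_mono _ hy₂.1
    · unfold squeeze; gcongr; exact hy₂.2
  · rintro ⟨k, rfl, hs, ht⟩
    have hp : 0 < R.p (R.e k) := by
      refine (R.nonneg _).lt_of_ne fun h0 => ?_
      simp [squeeze, ← h0] at ht
    have hk : R.squeeze k s ∈ Ico (R.q k) (R.q (k + 1)) := by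
      rw [← R.squeeze_zero, ← R.squeeze_one]
      constructor
      · exact R.squeeze_mono k hs.1
      · unfold squeeze; gcongr; exact hs.2
    refine ⟨α, R.squeeze k s, (t - R.q k) / R.p (R.e k), ⟨rfl, ?_, ?_⟩, ?_⟩
    · exact ⟨(R.q_nonneg k).trans hk.1, hk.2.trans_le (R.q_le_one _)⟩
    · simp only [squeeze] at ht
      rw [mem_Ico, le_div_iff₀ hp, div_lt_iff₀ hp]
      constructor <;> linarith [ht.1, ht.2]
    · rw [R.T_apply_of_mem_Ico _ _ hk]
      simp only [squeeze, add_sub_cancel_right, mul_div_cancel_left₀ _ hp.ne',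
        mul_div_cancel₀ _ hp.ne', sub_add_cancel]

/-- `squeeze (c (n-1)) ∘ ⋯ ∘ squeeze (c 0)`, the action of `Tⁿ` on the second coordinate along
the itinerary `c`. -/
def squeezeIter : (n : ℕ) → (Fin n → ℕ) → ℝ → ℝ
  | 0, _ => id
  | n + 1, c => squeezeIter n (Fin.tail c) ∘ R.squeeze (c 0)

def weight {n : ℕ} (c : Fin n → ℕ) : ℝ := ∏ i, R.p (R.e (c i))

theorem squeezeIter_cons {n : ℕ} (k : ℕ) (c : Fin n → ℕ) (t : ℝ) :
    R.squeezeIter (n + 1) (Fin.cons k c) t = R.squeezeIter n c (R.squeeze k t) := by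
  simp [squeezeIter]

theorem squeezeIter_eq_weight_mul_add {n : ℕ} (c : Fin n → ℕ) (t : ℝ) :
    R.squeezeIter n c t = R.weight c * t + R.squeezeIter n c 0 := by
  induction n generalizing t with
  | zero => simp [squeezeIter, weight]
  | succ n ih =>
    rw [← Fin.cons_self_tail c, squeezeIter_cons, squeezeIter_cons, ih, ih (t := R.squeeze _ 0)]
    simp only [weight, Fin.prod_univ_succ, Fin.cons_zero, Fin.cons_succ, squeeze]
    ring

theorem weight_nonneg {n : ℕ} (c : Fin n → ℕ) : 0 ≤ R.weight c :=
  Finset.prod_nonneg fun _ _ => R.nonneg _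

theorem squeezeIter_mono {n : ℕ} (c : Fin n → ℕ) : Monotone (R.squeezeIter n c) :=
  fun s t h => by
    rw [R.squeezeIter_eq_weight_mul_add c s, R.squeezeIter_eq_weight_mul_add c t]
    gcongr
    exact R.weight_nonneg c

theorem mapsTo_squeezeIter {n : ℕ} (c : Fin n → ℕ) :
    MapsTo (R.squeezeIter n c) (Icc 0 1) (Icc 0 1) := by
  induction n with
  | zero => exact mapsTo_id _
  | succ n ih => exact (ih _).comp (R.mapsTo_squeeze _)

theorem pairwise_disjoint_Ico_squeezeIter (n : ℕ) :
    Pairwise (Disjoint on fun c : Fin n → ℕ =>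
      Ico (R.squeezeIter n c 0) (R.squeezeIter n c 1)) := by
  induction n with
  | zero => exact fun c c' h => absurd (Subsingleton.elim c c') h
  | succ n ih =>
    intro c c' hne
    rw [← Fin.cons_self_tail c, ← Fin.cons_self_tail c'] at hne ⊢
    simp only [Function.onFun, squeezeIter_cons, squeeze_zero, squeeze_one]
    by_cases htail : Fin.tail c = Fin.tail c'
    · rw [htail] at hne ⊢
      have hk : c 0 ≠ c' 0 := fun h => hne (by rw [h])
      exact (R.squeezeIter_mono _).disjoint_Ico_map (R.q_mono.pairwise_disjoint_on_Ico_succ hk)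
    · have hsub (τ : Fin n → ℕ) (k : ℕ) :
          Ico (R.squeezeIter n τ (R.q k)) (R.squeezeIter n τ (R.q (k + 1))) ⊆
            Ico (R.squeezeIter n τ 0) (R.squeezeIter n τ 1) :=
        Ico_subset_Ico (R.squeezeIter_mono τ (R.q_nonneg k)) (R.squeezeIter_mono τ (R.q_le_one _))
      exact (ih htail).mono (hsub _ _) (hsub _ _)

theorem image_iterate_T_rwStrip (n : ℕ) (α : Fin d → ℤ) (u v : ℝ) :
    R.T^[n] '' rwStrip α u v =
      ⋃ c : Fin n → ℕ,
        rwStrip (α + ∑ i, R.e (c i)) (R.squeezeIter n c u) (R.squeezeIter n c v) := by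
  induction n generalizing α u v with
  | zero => simpa [squeezeIter] using (iUnion_const _).symm
  | succ n ih =>
    rw [Function.iterate_succ, image_comp, image_T_rwStrip, image_iUnion, eq_comm,
      ← (Fin.consEquiv fun _ => ℕ).surjective.iUnion_comp, iUnion_prod']
    refine iUnion_congr fun k => ?_
    simp [ih, Fin.consEquiv, squeezeIter_cons, Fin.sum_univ_succ, add_assoc]

theorem pairwise_disjoint_rwStrip_squeezeIter (n : ℕ) (α : Fin d → ℤ) {u v : ℝ} (hu : 0 ≤ u)
    (hv : v ≤ 1) :
    Pairwise (Disjoint on fun c : Fin n → ℕ =>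
      rwStrip (α + ∑ i, R.e (c i)) (R.squeezeIter n c u) (R.squeezeIter n c v)) :=
  fun c c' h => disjoint_prod.2 <| .inr <| disjoint_prod.2 <| .inr <|
    (R.pairwise_disjoint_Ico_squeezeIter n h).mono
      (Ico_subset_Ico (R.squeezeIter_mono c hu) (R.squeezeIter_mono c hv))
      (Ico_subset_Ico (R.squeezeIter_mono c' hu) (R.squeezeIter_mono c' hv))

theorem setIntegral_image_iterate_T_rwStrip {F : RWSpace d → ℝ} (hF : Measurable F) {C : ℝ}
    (hFC : ∀ x, |F x| ≤ C) (hFs : ∀ α y₁ y₂ y₂', F (α, y₁, y₂) = F (α, y₁, y₂'))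
    (n : ℕ) (α : Fin d → ℤ) {u v : ℝ} (hu : 0 ≤ u) (huv : u ≤ v) (hv : v ≤ 1) :
    ∫ x in R.T^[n] '' rwStrip α u v, F x ∂rwMeasure d =
      (v - u) * ∑' c : Fin n → ℕ,
        R.weight c * ∫ y in Ico (0 : ℝ) 1, F (α + ∑ i, R.e (c i), y, 0) := by
  have hw : HasSum (R.weight (n := n)) 1 := hasSum_prod_pi (fun _ => R.nonneg _) R.hasSum_p_e n
  have hu' (c : Fin n → ℕ) : 0 ≤ R.squeezeIter n c u :=
    (R.mapsTo_squeezeIter c ⟨hu, huv.trans hv⟩).1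
  have hv' (c : Fin n → ℕ) : R.squeezeIter n c v ≤ 1 :=
    (R.mapsTo_squeezeIter c ⟨hu.trans huv, hv⟩).2
  have huv' (c : Fin n → ℕ) : R.squeezeIter n c u ≤ R.squeezeIter n c v := R.squeezeIter_mono c huv
  have hlen (c : Fin n → ℕ) : R.squeezeIter n c v - R.squeezeIter n c u = R.weight c * (v - u) := by
    rw [R.squeezeIter_eq_weight_mul_add c u, R.squeezeIter_eq_weight_mul_add c v]
    ring
  set S : (Fin n → ℕ) → Set (RWSpace d) :=
    fun c => rwStrip (α + ∑ i, R.e (c i)) (R.squeezeIter n c u) (R.squeezeIter n c v)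
  have hfin : rwMeasure d (⋃ c, S c) < ⊤ :=
    calc rwMeasure d (⋃ c, S c) ≤ ∑' c, rwMeasure d (S c) := measure_iUnion_le _
      _ = ∑' c : Fin n → ℕ, ENNReal.ofReal (R.weight c * (v - u)) := by
        simp_rw [S, rwMeasure_rwStrip _ (hu' _) (hv' _), hlen]
      _ = ENNReal.ofReal (v - u) := by
        rw [← ENNReal.ofReal_tsum_of_nonneg
          (fun c => mul_nonneg (R.weight_nonneg c) (sub_nonneg.2 huv)) (hw.summable.mul_right _),
          tsum_mul_right, hw.tsum_eq, one_mul]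
      _ < ⊤ := ENNReal.ofReal_lt_top
  rw [image_iterate_T_rwStrip, integral_iUnion (fun c => measurableSet_rwStrip _ _ _)
    (R.pairwise_disjoint_rwStrip_squeezeIter n α hu hv)
    (Measure.integrableOn_of_bounded hfin.ne hF.aestronglyMeasurable
      (ae_of_all _ fun x => (Real.norm_eq_abs _).trans_le (hFC x))), ← tsum_mul_left]
  refine tsum_congr fun c => ?_
  rw [setIntegral_rwStrip hF hFC hFs _ (hu' c) (huv' c) (hv' c), hlen]
  ring

end RW

theorem rw_pushforward_integral_general (d : ℕ) (R : RW d)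
    (F : RWSpace d → ℝ) (hFmeas : Measurable F) (C : ℝ) (hFbdd : ∀ x, |F x| ≤ C)
    (hFs : ∀ (α : Fin d → ℤ) (y₁ y₂ y₂' : ℝ), F (α, y₁, y₂) = F (α, y₁, y₂'))
    (a b : ℝ) (h0 : 0 ≤ a) (hab : a ≤ b) (hb : b ≤ 1) (n : ℕ) :
    (∫ x in (R.T)^[n] '' ({(0 : Fin d → ℤ)} ×ˢ (Set.Ico (0:ℝ) 1 ×ˢ Set.Ico a b)),
        F x ∂(rwMeasure d))
      = (b - a) * (∑' c : Fin n → (Fin d → ℤ),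
          (∏ i, R.p (c i)) * ∫ y in Set.Ico (0:ℝ) 1, F ((∑ i, c i), y, 0)) ∧
    (∫ x in (R.T)^[n] '' ({(0 : Fin d → ℤ)} ×ˢ (Set.Ico (0:ℝ) 1 ×ˢ Set.Ico a b)),
        F x ∂(rwMeasure d))
      = (b - a) * (∑' α : Fin d → ℤ,
          convPow R.p n α * ∫ y in Set.Ico (0:ℝ) 1, F (α, y, 0)) := by
  have hf (α : Fin d → ℤ) : |∫ y in Ico (0 : ℝ) 1, F (α, y, 0)| ≤ C := by
    simpa using norm_setIntegral_le_of_norm_le_const (μ := volume) (s := Ico (0 : ℝ) 1)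
      measure_Ico_lt_top
      fun y _ => (Real.norm_eq_abs _).trans_le (hFbdd (α, y, 0))
  have hmultinomial := R.setIntegral_image_iterate_T_rwStrip hFmeas hFbdd hFs n 0 h0 hab hb
  simp only [zero_add] at hmultinomial
  rw [← tsum_prod_mul_sum_eq_tsum_convPow R.nonneg R.total n hf, and_self,
    ← (Equiv.piCongrRight fun _ : Fin n => R.e).tsum_eq]
  exact hmultinomial

/-- Equations (5.13) and (5.16): for an essentially bounded observable of the form
`F(α; y₁, y₂) = F_α(y₁)` and `Q = {0} × [0,1) × I` with `I = [a,b) ⊆ [0,1)` of length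
`h = b − a`, one has
`∫_{TⁿQ} F dμ = h Σ_{β⁽¹⁾,…,β⁽ⁿ⁾} p_{β⁽¹⁾} ⋯ p_{β⁽ⁿ⁾} f_{β⁽¹⁾+⋯+β⁽ⁿ⁾}
             = h Σ_α p^{(n)}_α f_α`,
where `f_α = ∫₀¹ F_α(y₁) dy₁`. -/
theorem rw_pushforward_integral (d : ℕ) (hd : 1 ≤ d) (R : RW d)
    (F : RWSpace d → ℝ) (hFmeas : Measurable F) (C : ℝ) (hFbdd : ∀ x, |F x| ≤ C)
    (hFs : ∀ (α : Fin d → ℤ) (y₁ y₂ y₂' : ℝ), F (α, y₁, y₂) = F (α, y₁, y₂'))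
    (a b : ℝ) (h0 : 0 ≤ a) (hab : a ≤ b) (hb : b ≤ 1) (n : ℕ) :
    (∫ x in (R.T)^[n] '' ({(0 : Fin d → ℤ)} ×ˢ (Set.Ico (0:ℝ) 1 ×ˢ Set.Ico a b)),
        F x ∂(rwMeasure d))
      = (b - a) * (∑' c : Fin n → (Fin d → ℤ),
          (∏ i, R.p (c i)) * ∫ y in Set.Ico (0:ℝ) 1, F ((∑ i, c i), y, 0)) ∧
    (∫ x in (R.T)^[n] '' ({(0 : Fin d → ℤ)} ×ˢ (Set.Ico (0:ℝ) 1 ×ˢ Set.Ico a b)),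
        F x ∂(rwMeasure d))
      = (b - a) * (∑' α : Fin d → ℤ,
          convPow R.p n α * ∫ y in Set.Ico (0:ℝ) 1, F (α, y, 0)) :=
  rw_pushforward_integral_general d R F hFmeas C hFbdd hFs a b h0 hab hb n
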